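/- Let L ≥ 1, let I₁, I₂ ⊂ ℝ be intervals with I₁ ∩ I₂ ≠ ∅, and let g_i : I_i → ℝ be L-Lipschitz functions for i ∈ {1, 2}, with graphs Γ_i = {(t, g_i(t)) : t ∈ I_i} ⊂ ℝ². Then for every δ > 0, the intersection Γ₁(δ) ∩ Γ₂(δ) of the closed δ-neighbourhoods of the graphs is contained in the closed 6Lδ-neighbourhood of the set {(t, g₁(t)) : t ∈ I₁ ∩ I₂ and |g₁(t) − g₂(t)| ≤ 6Lδ}. -/

import Mathlib

/-!
Let `z` lie within `δ` of both graphs, so within some `ρ > δ` of points `(t₁, g₁ t₁)` and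
`(t₂, g₂ t₂)`. Since the intervals are order-connected and meet, some `s ∈ I₁ ∩ I₂` lies
between `t₁` and `t₂`. Then `|s - t₁| + |s - t₂| = |t₁ - t₂| ≤ 2ρ`, and the Lipschitz bounds
along these two steps put both `|g₁ s - g₂ s|` and `dist z (s, g₁ s)` below
`L |t₁ - t₂| + 2ρ ≤ 4Lρ` (as `L ≥ 1`), which is `6Lδ` for `ρ = 3δ/2`.
-/

open Set Metric

/-- The point `(x, y)` of `ℝ²` as a Euclidean space. -/
noncomputable def e2 (x y : ℝ) : EuclideanSpace ℝ (Fin 2) :=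
  (WithLp.equiv 2 (Fin 2 → ℝ)).symm ![x, y]

/-- The closed `δ`-neighbourhood of a set `A ⊂ ℝ²`. -/
def nbhd2 (A : Set (EuclideanSpace ℝ (Fin 2))) (δ : ℝ) : Set (EuclideanSpace ℝ (Fin 2)) :=
  {x | Metric.infDist x A ≤ δ}

@[simp] lemma e2_apply_zero (x y : ℝ) : e2 x y 0 = x := rfl

@[simp] lemma e2_apply_one (x y : ℝ) : e2 x y 1 = y := rfl

lemma abs_sub_fst_le_dist_e2 (z : EuclideanSpace ℝ (Fin 2)) (x y : ℝ) :
    |z 0 - x| ≤ dist z (e2 x y) := by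
  simpa [Real.dist_eq] using PiLp.dist_apply_le z (e2 x y) 0

lemma abs_sub_snd_le_dist_e2 (z : EuclideanSpace ℝ (Fin 2)) (x y : ℝ) :
    |z 1 - y| ≤ dist z (e2 x y) := by
  simpa [Real.dist_eq] using PiLp.dist_apply_le z (e2 x y) 1

lemma dist_e2_le (z : EuclideanSpace ℝ (Fin 2)) (x y : ℝ) :
    dist z (e2 x y) ≤ |z 0 - x| + |z 1 - y| := by
  rw [EuclideanSpace.dist_eq, Fin.sum_univ_two, Real.sqrt_le_left (by positivity)]
  simp only [e2_apply_zero, e2_apply_one, Real.dist_eq, sq_abs]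
  nlinarith [abs_nonneg (z 0 - x), abs_nonneg (z 1 - y), sq_abs (z 0 - x), sq_abs (z 1 - y)]

theorem Set.OrdConnected.exists_mem_inter_uIcc {α : Type*} [LinearOrder α] {I₁ I₂ : Set α}
    (hI₁ : I₁.OrdConnected) (hI₂ : I₂.OrdConnected) (hI : (I₁ ∩ I₂).Nonempty)
    {t₁ t₂ : α} (ht₁ : t₁ ∈ I₁) (ht₂ : t₂ ∈ I₂) : ∃ s ∈ I₁ ∩ I₂, s ∈ uIcc t₁ t₂ := by
  obtain ⟨t₀, ht₀₁, ht₀₂⟩ := hI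
  -- the projection of `t₀` onto `[[t₁, t₂]]` lies between `t₀` and each of `t₁`, `t₂`
  have hs : max (min t₁ t₂) (min t₀ (max t₁ t₂)) ∈ uIcc t₀ t₁ ∩ uIcc t₀ t₂ ∩ uIcc t₁ t₂ := by
    simp only [mem_inter_iff, mem_uIcc]
    grind
  exact ⟨_, ⟨hI₁.uIcc_subset ht₀₁ ht₁ hs.1.1, hI₂.uIcc_subset ht₀₂ ht₂ hs.1.2⟩, hs.2⟩

section NearGraphs

variable {L ρ s t₁ t₂ : ℝ} {g₁ g₂ : ℝ → ℝ} {z : EuclideanSpace ℝ (Fin 2)}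

lemma abs_sub_le_of_mem_uIcc_of_near_graphs (hs : s ∈ uIcc t₁ t₂)
    (hg₁ : |g₁ s - g₁ t₁| ≤ L * |s - t₁|) (hg₂ : |g₂ s - g₂ t₂| ≤ L * |s - t₂|)
    (h₁ : dist z (e2 t₁ (g₁ t₁)) ≤ ρ) (h₂ : dist z (e2 t₂ (g₂ t₂)) ≤ ρ) :
    |g₁ s - g₂ s| ≤ L * |t₁ - t₂| + 2 * ρ := by
  have hsplit : |s - t₁| + |s - t₂| = |t₁ - t₂| := by
    have := dist_add_dist_of_mem_segment (segment_eq_uIcc t₁ t₂ ▸ hs)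
    rwa [Real.dist_eq, Real.dist_eq, Real.dist_eq, abs_sub_comm t₁ s] at this
  have hb : |g₁ t₁ - g₂ t₂| ≤ 2 * ρ := by
    have hb₁ := (abs_sub_snd_le_dist_e2 z _ _).trans h₁
    have hb₂ := (abs_sub_snd_le_dist_e2 z _ _).trans h₂
    rw [abs_sub_comm] at hb₁
    linarith [abs_sub_le (g₁ t₁) (z 1) (g₂ t₂)]
  calc |g₁ s - g₂ s| ≤ |g₁ s - g₁ t₁| + |g₁ t₁ - g₂ t₂| + |g₂ t₂ - g₂ s| := by
        simpa only [Real.dist_eq] using dist_triangle4 (g₁ s) (g₁ t₁) (g₂ t₂) (g₂ s)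
    _ ≤ L * |s - t₁| + 2 * ρ + L * |s - t₂| := by rw [abs_sub_comm (g₂ t₂)]; gcongr
    _ = L * |t₁ - t₂| + 2 * ρ := by rw [← hsplit]; ring

lemma dist_e2_le_of_mem_uIcc_of_near_graph (hL : 0 ≤ L) (hs : s ∈ uIcc t₁ t₂)
    (hg₁ : |g₁ s - g₁ t₁| ≤ L * |s - t₁|) (h₁ : dist z (e2 t₁ (g₁ t₁)) ≤ ρ)
    (h₂ : |z 0 - t₂| ≤ ρ) : dist z (e2 s (g₁ s)) ≤ L * |t₁ - t₂| + 2 * ρ := by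
  have ha₁ := (abs_sub_fst_le_dist_e2 z _ _).trans h₁
  have hb₁ := (abs_sub_snd_le_dist_e2 z _ _).trans h₁
  have ha : s ∈ closedBall (z 0) ρ :=
    (convex_closedBall (z 0) ρ).segment_subset (by rwa [mem_closedBall', Real.dist_eq])
      (by rwa [mem_closedBall', Real.dist_eq]) (segment_eq_uIcc t₁ t₂ ▸ hs)
  rw [mem_closedBall', Real.dist_eq] at ha
  calc dist z (e2 s (g₁ s)) ≤ |z 0 - s| + |z 1 - g₁ s| := dist_e2_le z s (g₁ s)
    _ ≤ ρ + (|z 1 - g₁ t₁| + |g₁ s - g₁ t₁|) := by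
        rw [abs_sub_comm (g₁ s)]; gcongr; exact abs_sub_le _ _ _
    _ ≤ ρ + (ρ + L * |t₁ - t₂|) := by
        gcongr
        exact hg₁.trans (mul_le_mul_of_nonneg_left
          ((abs_sub_left_of_mem_uIcc hs).trans_eq (abs_sub_comm _ _)) hL)
    _ = L * |t₁ - t₂| + 2 * ρ := by ring

end NearGraphs

/-- Fact B.8: if `g₁, g₂` are `L`-Lipschitz functions on intervals `I₁, I₂` with
`I₁ ∩ I₂ ≠ ∅`, then the intersection of the `δ`-neighbourhoods of their graphs is
contained in the `6Lδ`-neighbourhood of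
`{(t, g₁(t)) : t ∈ I₁ ∩ I₂, |g₁(t) - g₂(t)| ≤ 6Lδ}`. -/
theorem lipschitz_graph_neighbourhoods (L : ℝ) (hL : 1 ≤ L) (I₁ I₂ : Set ℝ)
    (hI₁ : I₁.OrdConnected) (hI₂ : I₂.OrdConnected) (hI : (I₁ ∩ I₂).Nonempty)
    (g₁ g₂ : ℝ → ℝ)
    (hg₁ : ∀ t ∈ I₁, ∀ s ∈ I₁, |g₁ t - g₁ s| ≤ L * |t - s|)
    (hg₂ : ∀ t ∈ I₂, ∀ s ∈ I₂, |g₂ t - g₂ s| ≤ L * |t - s|)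
    (δ : ℝ) (hδ : 0 < δ) :
    nbhd2 {z | ∃ t ∈ I₁, z = e2 t (g₁ t)} δ ∩ nbhd2 {z | ∃ t ∈ I₂, z = e2 t (g₂ t)} δ ⊆
      nbhd2 {z | ∃ t ∈ I₁ ∩ I₂, |g₁ t - g₂ t| ≤ 6 * L * δ ∧ z = e2 t (g₁ t)}
        (6 * L * δ) := by
  obtain ⟨t₀, ht₀₁, ht₀₂⟩ := hI
  rintro z ⟨hz₁, hz₂⟩
  obtain ⟨ρ, hδρ, hρ⟩ : ∃ ρ, δ < ρ ∧ 4 * L * ρ = 6 * L * δ := ⟨3 * δ / 2, by linarith, by ring⟩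
  obtain ⟨_, ⟨t₁, ht₁, rfl⟩, h₁⟩ :=
    (infDist_lt_iff (by exact ⟨_, t₀, ht₀₁, rfl⟩)).1 (hz₁.trans_lt hδρ)
  obtain ⟨_, ⟨t₂, ht₂, rfl⟩, h₂⟩ :=
    (infDist_lt_iff (by exact ⟨_, t₀, ht₀₂, rfl⟩)).1 (hz₂.trans_lt hδρ)
  obtain ⟨s, hs, hst⟩ := hI₁.exists_mem_inter_uIcc hI₂ ⟨t₀, ht₀₁, ht₀₂⟩ ht₁ ht₂
  have ha₂ := (abs_sub_fst_le_dist_e2 z _ _).trans h₂.le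
  have hbound : L * |t₁ - t₂| + 2 * ρ ≤ 6 * L * δ := by
    have ha₁ := (abs_sub_fst_le_dist_e2 z _ _).trans h₁.le
    have ht : |t₁ - t₂| ≤ 2 * ρ := by
      linarith [abs_sub_le t₁ (z 0) t₂, abs_sub_comm t₁ (z 0)]
    nlinarith [mul_le_mul_of_nonneg_left ht (by linarith : 0 ≤ L)]
  have hgap := abs_sub_le_of_mem_uIcc_of_near_graphs hst (hg₁ s hs.1 t₁ ht₁)
    (hg₂ s hs.2 t₂ ht₂) h₁.le h₂.le
  have hdist := dist_e2_le_of_mem_uIcc_of_near_graph (by linarith) hst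
    (hg₁ s hs.1 t₁ ht₁) h₁.le ha₂
  exact (infDist_le_dist_of_mem (by exact ⟨s, hs, hgap.trans hbound, rfl⟩)).trans
    (hdist.trans hbound)
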